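/- arXiv:2012.14387 — 2 statements merged into one kernel-verified Lean document; each statement's English description precedes it below -/
import Mathlib

section
/- If B > 0 is a constant such that ψ(t) ≤ B·t for all t ≥ 1, then there is a constant B' > 0 such that for every real x ≥ 2, π(x) ≤ ψ(x)/log x + B' · x/(log x)². -/
/-- `ψ x = ∑_{n ≤ x} Λ(n)`, the Chebyshev function. -/
noncomputable def psi (x : ℝ) : ℝ := ∑ n ∈ Finset.Icc 1 ⌊x⌋₊, ArithmeticFunction.vonMangoldt n

/-- `π x`, the number of primes `≤ x`. -/
noncomputable def primePi (x : ℝ) : ℕ := ((Finset.Icc 1 ⌊x⌋₊).filter Nat.Prime).card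

/-!
Abel summation gives `π(x) = θ(x) / log x + ∫₂ˣ θ(t) / (t log² t) dt`. Since `θ ≤ ψ ≤ B t`, the
integral is at most `B ∫₂ˣ dt / log² t = O(x / log² x)`.
-/

open Real

open scoped Chebyshev

lemma psi_eq_chebyshev_psi (x : ℝ) : psi x = ψ x := by
  rw [psi, Chebyshev.psi, ← Finset.Icc_add_one_left_eq_Ioc, zero_add]

lemma primePi_eq_primeCounting (x : ℝ) : primePi x = Nat.primeCounting ⌊x⌋₊ := by
  rw [← Nat.primesLE_card_eq_primeCounting, primePi, Nat.primesLE_eq_filter_range]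
  congr 1
  ext p
  simp only [Finset.mem_filter, Finset.mem_Icc, Finset.mem_range]
  exact ⟨fun ⟨_, hp⟩ => ⟨by omega, hp⟩, fun ⟨_, hp⟩ => ⟨⟨hp.one_lt.le, by omega⟩, hp⟩⟩

lemma integral_one_div_log_sq_le_div_log_two_sq {x : ℝ} (hx : 2 ≤ x) :
    ∫ t in 2..x, 1 / log t ^ 2 ≤ x / log 2 ^ 2 := by
  calc ∫ t in 2..x, 1 / log t ^ 2 ≤ ∫ _ in 2..x, 1 / log 2 ^ 2 := by
        refine intervalIntegral.integral_mono_on hx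
          (Chebyshev.intervalIntegrable_one_div_log_sq (by norm_num) (by linarith)) (by simp)
          fun t ⟨ht, _⟩ => ?_
        gcongr
    _ = (x - 2) / log 2 ^ 2 := by rw [intervalIntegral.integral_const, smul_eq_mul, mul_one_div]
    _ ≤ x / log 2 ^ 2 := by gcongr; linarith

lemma exists_integral_one_div_log_sq_le :
    ∃ C > 0, ∀ x ≥ 2, ∫ t in 2..x, 1 / log t ^ 2 ≤ C * (x / log x ^ 2) := by
  obtain ⟨c, hc, hO⟩ := Chebyshev.integral_one_div_log_sq_isBigO.exists_pos
  obtain ⟨X, hX⟩ := Filter.eventually_atTop.mp hO.bound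
  -- Below `X` the crude bound `x / log² 2` costs only the factor `log² X / log² 2`.
  refine ⟨max c (log X ^ 2 / log 2 ^ 2), by positivity, fun x hx => ?_⟩
  have hlogx : 0 < log x := log_pos (by linarith)
  rcases le_total X x with hXx | hxX
  · calc ∫ t in 2..x, 1 / log t ^ 2 ≤ ‖∫ t in 2..x, 1 / log t ^ 2‖ := le_norm_self _
      _ ≤ c * ‖x / log x ^ 2‖ := hX x hXx
      _ = c * (x / log x ^ 2) := by rw [norm_of_nonneg (by positivity)]
      _ ≤ _ := by gcongr; exact le_max_left _ _
  · calc ∫ t in 2..x, 1 / log t ^ 2 ≤ x / log 2 ^ 2 :=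
          integral_one_div_log_sq_le_div_log_two_sq hx
      _ = log x ^ 2 / log 2 ^ 2 * (x / log x ^ 2) := by field_simp
      _ ≤ _ := by gcongr; exact le_max_of_le_right (by gcongr)

lemma integral_theta_div_log_sq_le {B x : ℝ} (hθ : ∀ t, 2 ≤ t → θ t ≤ B * t) (hx : 2 ≤ x) :
    ∫ t in 2..x, θ t / (t * log t ^ 2) ≤ B * ∫ t in 2..x, 1 / log t ^ 2 := by
  rw [← intervalIntegral.integral_const_mul]
  refine intervalIntegral.integral_mono_on hx
    ((intervalIntegrable_iff_integrableOn_Icc_of_le hx).mpr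
      (Chebyshev.integrableOn_theta_div_id_mul_log_sq x))
    ((Chebyshev.intervalIntegrable_one_div_log_sq (by norm_num) (by linarith)).const_mul B)
    fun t ⟨ht, _⟩ => ?_
  have : 0 < log t := log_pos (by linarith)
  calc θ t / (t * log t ^ 2) ≤ B * t / (t * log t ^ 2) := by gcongr; exact hθ t ht
    _ = B * (1 / log t ^ 2) := by field_simp

theorem stmt_14 (B : ℝ) (hB : 0 < B) (hpsi : ∀ t : ℝ, 1 ≤ t → psi t ≤ B * t) :
    ∃ B' : ℝ, 0 < B' ∧ ∀ x : ℝ, 2 ≤ x →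
      (primePi x : ℝ) ≤ psi x / Real.log x + B' * x / (Real.log x) ^ 2 := by
  obtain ⟨C, hC, hintegral⟩ := exists_integral_one_div_log_sq_le
  have hθ : ∀ t, 2 ≤ t → θ t ≤ B * t := fun t ht =>
    (Chebyshev.theta_le_psi t).trans (psi_eq_chebyshev_psi t ▸ hpsi t (by linarith))
  refine ⟨B * C, by positivity, fun x hx => ?_⟩
  calc (primePi x : ℝ) = θ x / log x + ∫ t in 2..x, θ t / (t * log t ^ 2) := by
        rw [primePi_eq_primeCounting, Chebyshev.primeCounting_eq_theta_div_log_add_integral hx]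
    _ ≤ psi x / log x + B * (C * (x / log x ^ 2)) := by
        rw [psi_eq_chebyshev_psi]
        gcongr
        · exact log_nonneg (by linarith)
        · exact Chebyshev.theta_le_psi x
        · exact (integral_theta_div_log_sq_le hθ hx).trans (by gcongr; exact hintegral x hx)
    _ = psi x / log x + B * C * x / log x ^ 2 := by ring
end

section
/- The function x ↦ Σ_{n ≤ x} (μ(n)/n) · log(x/n) is bounded on [1, ∞); equivalently, x ↦ ∫_1^x (Σ_{i ≤ t} μ(i)/i) dt/t is bounded on [1, ∞). -/
/-!
Write `M(N) = ∑_{n ≤ N} μ(n)/n` and `H(y) = ∑_{k ≤ y} 1/k`. Möbius inversion gives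
`∑_{n ≤ N} μ(n) ⌊N/n⌋ = 1`, hence `|M(N)| ≤ 1`, and `∑_{n ≤ x} μ(n)/n · H(x/n) = 1`.
Since `H(y) = log y + γ + O(1/y)`, replacing `H(x/n)` by `log (x/n) + γ` shows
`∑_{n ≤ x} μ(n)/n · log (x/n) = 1 - γ M(x) + O(∑_{n ≤ x} 1/n · n/x)`, which is bounded.
The integral is the same sum, by Abel summation against `t ↦ log (x/t)`.
-/

open Finset Real
open scoped ArithmeticFunction.Moebius ArithmeticFunction.zeta

lemma Nat.Icc_one_eq_Ioc_zero (N : ℕ) : Icc 1 N = Ioc 0 N := rfl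

lemma sum_Icc_zero_eq_sum_Icc_one {M : Type*} [AddCommMonoid M] {g : ℕ → M} (hg : g 0 = 0)
    (N : ℕ) : ∑ k ∈ Icc 0 N, g k = ∑ k ∈ Icc 1 N, g k := by
  rw [Icc_eq_cons_Ioc (Nat.zero_le N), sum_cons, hg, zero_add, Nat.Icc_one_eq_Ioc_zero]

namespace ArithmeticFunction

noncomputable def invId : ArithmeticFunction ℝ := ⟨fun n => (n : ℝ)⁻¹, by simp⟩

@[simp]
lemma invId_apply (n : ℕ) : invId n = (n : ℝ)⁻¹ := rfl

lemma pmul_invId_mul_pmul_invId (f g : ArithmeticFunction ℝ) :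
    f.pmul invId * g.pmul invId = (f * g).pmul invId := by
  ext m
  simp only [mul_apply, pmul_apply, invId_apply, sum_mul]
  refine sum_congr rfl fun p hp => ?_
  rw [← (Nat.mem_divisorsAntidiagonal.mp hp).1, Nat.cast_mul, mul_inv]
  ring

lemma sum_Icc_moebius_mul_floor_div_eq_one {N : ℕ} (hN : 1 ≤ N) :
    ∑ n ∈ Icc 1 N, (μ n : ℝ) * ⌊(N : ℝ) / n⌋₊ = 1 := by
  have h := sum_Ioc_mul_zeta_eq_sum (μ : ArithmeticFunction ℝ) N
  rw [coe_moebius_mul_coe_zeta, ← Nat.Icc_one_eq_Ioc_zero,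
    sum_eq_single_of_mem 1 (mem_Icc.mpr ⟨le_rfl, hN⟩) fun n _ hn => one_apply_ne hn,
    one_one] at h
  simp_rw [Nat.floor_div_natCast, Nat.floor_natCast]
  simpa using h.symm

lemma abs_sum_Icc_moebius_div_le_one (N : ℕ) : |∑ n ∈ Icc 1 N, (μ n : ℝ) / n| ≤ 1 := by
  rcases Nat.eq_zero_or_pos N with rfl | hN
  · simp
  set M := ∑ n ∈ Icc 1 N, (μ n : ℝ) / n
  -- `N M - 1 = ∑ μ(n) {N/n}`, and the fractional part `{N/n}` vanishes at `n = 1`.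
  set r : ℕ → ℝ := fun n => (N : ℝ) / n - ⌊(N : ℝ) / n⌋₊
  have hr : ∀ n, |r n| ≤ 1 := fun n => by
    have := Nat.floor_le (a := (N : ℝ) / n) (by positivity)
    have := Nat.lt_floor_add_one ((N : ℝ) / n)
    rw [abs_le]; constructor <;> linarith
  have hsplit : N * M - 1 = ∑ n ∈ Icc 2 N, μ n * r n := by
    rw [← sum_Icc_moebius_mul_floor_div_eq_one hN, mul_sum, ← sum_sub_distrib,
      ← insert_Icc_add_one_left_eq_Icc hN, sum_insert (by simp)]
    simp [r, mul_sub, mul_div_left_comm]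
  have hbound : |N * M - 1| ≤ N - 1 := by
    rw [hsplit]
    calc |∑ n ∈ Icc 2 N, μ n * r n| ≤ ∑ n ∈ Icc 2 N, 1 := by
          refine (abs_sum_le_sum_abs _ _).trans (sum_le_sum fun n _ => ?_)
          rw [abs_mul]
          exact mul_le_one₀ (mod_cast abs_moebius_le_one) (abs_nonneg _) (hr n)
      _ = N - 1 := by simp [Nat.cast_sub hN]
  have hN' : (0 : ℝ) < N := by exact_mod_cast hN
  rw [← mul_le_mul_iff_of_pos_left hN', mul_one, ← abs_of_pos hN', ← abs_mul, abs_of_pos hN']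
  have := abs_sub_abs_le_abs_sub (N * M) 1
  rw [abs_one] at this
  linarith

lemma sum_Icc_moebius_div_mul_harmonic_div_eq_one {N : ℕ} (hN : 1 ≤ N) :
    ∑ n ∈ Icc 1 N, (μ n : ℝ) / n * harmonic (N / n) = 1 := by
  have h := sum_Ioc_mul_eq_sum_sum ((μ : ArithmeticFunction ℝ).pmul invId)
    ((ζ : ArithmeticFunction ℝ).pmul invId) N
  rw [pmul_invId_mul_pmul_invId, coe_moebius_mul_coe_zeta, ← Nat.Icc_one_eq_Ioc_zero,
    sum_eq_single_of_mem 1 (mem_Icc.mpr ⟨le_rfl, hN⟩) fun n _ hn => by simp [one_apply_ne hn]] at h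
  simp only [pmul_apply, one_one, intCoe_apply, natCoe_apply, invId_apply, Nat.cast_one, inv_one,
    one_mul] at h
  rw [h]
  refine sum_congr rfl fun n _ => ?_
  rw [harmonic_eq_sum_Icc, div_eq_mul_inv, ← Nat.Icc_one_eq_Ioc_zero]
  push_cast
  congr 1
  refine sum_congr rfl fun m hm => ?_
  rw [zeta_apply_ne (by grind), Nat.cast_one, one_mul]

end ArithmeticFunction

lemma integral_sum_Icc_div_eq_sum_mul_log (f : ArithmeticFunction ℝ) {x : ℝ} (hx : 1 ≤ x) :
    ∫ t in (1 : ℝ)..x, (∑ i ∈ Icc 1 ⌊t⌋₊, f i) / t = ∑ n ∈ Icc 1 ⌊x⌋₊, f n * log (x / n) := by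
  have hderiv : deriv (fun t => log x - log t) = fun t => -t⁻¹ := by
    ext t; rw [deriv_const_sub, deriv_log]
  have hdiff : ∀ t ∈ Set.Icc 1 x, DifferentiableAt ℝ (fun t => log x - log t) t := fun t ht =>
    (differentiableAt_log (by linarith [ht.1])).const_sub _
  have hint : MeasureTheory.IntegrableOn (deriv fun t => log x - log t) (Set.Icc 1 x) := by
    rw [hderiv]
    exact (continuousOn_inv₀.mono fun t ht => ne_of_gt (by linarith [ht.1] : (0 : ℝ) < t)).neg
      |>.integrableOn_Icc
  have abel := sum_mul_eq_sub_integral_mul₀ f f.map_zero x hdiff hint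
  simp only [hderiv, sub_self, zero_mul, zero_sub, neg_mul, MeasureTheory.integral_neg,
    neg_neg] at abel
  simp_rw [sum_Icc_zero_eq_sum_Icc_one f.map_zero,
    sum_Icc_zero_eq_sum_Icc_one (g := fun k : ℕ => (log x - log k) * f k) (by simp),
    ← div_eq_inv_mul] at abel
  rw [intervalIntegral.integral_of_le hx, ← abel]
  refine sum_congr rfl fun n hn => ?_
  rw [log_div (by linarith) (by have := (mem_Icc.mp hn).1; positivity), mul_comm]

lemma log_add_one_sub_log_le_inv {m : ℝ} (hm : 0 < m) : log (m + 1) - log m ≤ m⁻¹ := by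
  rw [← log_div (by positivity) hm.ne']
  calc log ((m + 1) / m) ≤ (m + 1) / m - 1 := log_le_sub_one_of_pos (by positivity)
    _ = m⁻¹ := by field_simp; ring

lemma abs_harmonic_floor_sub_log_sub_eulerMascheroniConstant_le {y : ℝ} (hy : 1 ≤ y) :
    |harmonic ⌊y⌋₊ - log y - eulerMascheroniConstant| ≤ 2 / y := by
  set m := ⌊y⌋₊
  have hm : 1 ≤ m := Nat.le_floor (by exact_mod_cast hy)
  have hm' : (1 : ℝ) ≤ m := by exact_mod_cast hm
  have hmy : (m : ℝ) ≤ y := Nat.floor_le (by linarith)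
  have hym : y < m + 1 := Nat.lt_floor_add_one y
  have hlower := eulerMascheroniSeq_lt_eulerMascheroniConstant m
  have hupper := eulerMascheroniConstant_lt_eulerMascheroniSeq' m
  rw [eulerMascheroniSeq] at hlower
  rw [eulerMascheroniSeq', if_neg (by omega)] at hupper
  have hlog₁ : log m ≤ log y := log_le_log (by positivity) hmy
  have hlog₂ : log y ≤ log (m + 1) := log_le_log (by positivity) hym.le
  have hgap := log_add_one_sub_log_le_inv (by positivity : (0 : ℝ) < m)
  have hinv : (m : ℝ)⁻¹ ≤ 2 / y := by
    rw [inv_eq_one_div, div_le_div_iff₀ (by positivity) (by positivity)]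
    linarith
  rw [abs_le]
  constructor <;> linarith

lemma abs_sum_moebius_div_mul_log_le_four {x : ℝ} (hx : 1 ≤ x) :
    |∑ n ∈ Icc 1 ⌊x⌋₊, (μ n : ℝ) / n * log (x / n)| ≤ 4 := by
  set N := ⌊x⌋₊
  set γ := eulerMascheroniConstant
  set E : ℝ → ℝ := fun y => harmonic ⌊y⌋₊ - log y - γ
  set M := ∑ n ∈ Icc 1 N, (μ n : ℝ) / n
  have hN : 1 ≤ N := Nat.le_floor (by exact_mod_cast hx)
  have hNx : (N : ℝ) ≤ x := Nat.floor_le (by linarith)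
  have hsplit : ∑ n ∈ Icc 1 N, (μ n : ℝ) / n * log (x / n)
      = 1 - γ * M - ∑ n ∈ Icc 1 N, (μ n : ℝ) / n * E (x / n) := by
    rw [← ArithmeticFunction.sum_Icc_moebius_div_mul_harmonic_div_eq_one hN, mul_sum, ← sum_sub_distrib,
      ← sum_sub_distrib]
    refine sum_congr rfl fun n _ => ?_
    simp only [E, Nat.floor_div_natCast]
    ring
  have hE : |∑ n ∈ Icc 1 N, (μ n : ℝ) / n * E (x / n)| ≤ 2 := by
    calc |∑ n ∈ Icc 1 N, (μ n : ℝ) / n * E (x / n)|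
        ≤ ∑ n ∈ Icc 1 N, 2 / x := by
          refine (abs_sum_le_sum_abs _ _).trans (sum_le_sum fun n hn => ?_)
          obtain ⟨hn1, hnN⟩ := mem_Icc.mp hn
          have hn : (0 : ℝ) < n := by exact_mod_cast hn1
          have hxn : 1 ≤ x / n := by
            rw [le_div_iff₀ hn, one_mul]; exact le_trans (by exact_mod_cast hnN) hNx
          calc |(μ n : ℝ) / n * E (x / n)| = |(μ n : ℝ)| / n * |E (x / n)| := by
                rw [abs_mul, abs_div, abs_of_pos hn]
            _ ≤ 1 / n * (2 / (x / n)) := by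
                gcongr
                · exact_mod_cast ArithmeticFunction.abs_moebius_le_one
                · exact abs_harmonic_floor_sub_log_sub_eulerMascheroniConstant_le hxn
            _ = 2 / x := by field_simp
      _ = N * (2 / x) := by simp
      _ ≤ 2 := by rw [mul_div_assoc', div_le_iff₀ (by linarith)]; linarith
  have hγM : |γ * M| ≤ 1 := by
    rw [abs_mul, abs_of_pos (by linarith [one_half_lt_eulerMascheroniConstant])]
    exact mul_le_one₀ (by linarith [eulerMascheroniConstant_lt_two_thirds]) (abs_nonneg _)
      (ArithmeticFunction.abs_sum_Icc_moebius_div_le_one N)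
  rw [hsplit]
  calc |1 - γ * M - ∑ n ∈ Icc 1 N, (μ n : ℝ) / n * E (x / n)|
      ≤ |(1 : ℝ)| + |γ * M| + |∑ n ∈ Icc 1 N, (μ n : ℝ) / n * E (x / n)| :=
        (abs_sub _ _).trans (by gcongr; exact abs_sub _ _)
    _ ≤ 1 + 1 + 2 := by rw [abs_one]; gcongr
    _ = 4 := by norm_num

theorem stmt_16 :
    (∃ C : ℝ, ∀ x : ℝ, 1 ≤ x →
      |∑ n ∈ Finset.Icc 1 ⌊x⌋₊,
        ((ArithmeticFunction.moebius n : ℝ) / n) * Real.log (x / n)| ≤ C) ∧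
    (∃ C : ℝ, ∀ x : ℝ, 1 ≤ x →
      |∫ t in (1:ℝ)..x, (∑ i ∈ Finset.Icc 1 ⌊t⌋₊,
        (ArithmeticFunction.moebius i : ℝ) / i) / t| ≤ C) := by
  refine ⟨⟨4, fun x hx => abs_sum_moebius_div_mul_log_le_four hx⟩, ⟨4, fun x hx => ?_⟩⟩
  have h := integral_sum_Icc_div_eq_sum_mul_log
    ((μ : ArithmeticFunction ℝ).pmul ArithmeticFunction.invId) hx
  simp only [ArithmeticFunction.pmul_apply, ArithmeticFunction.intCoe_apply,
    ArithmeticFunction.invId_apply, ← div_eq_mul_inv] at h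
  rw [h]
  exact abs_sum_moebius_div_mul_log_le_four hx
end
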